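/- arXiv:1904.13263 — 8 statements merged into one kernel-verified Lean document; each statement's English description precedes it below -/
import Mathlib

section
/- Let $k$ be a field and $n\geq m\geq 2$. Let $V_r$ denote the space of homogeneous polynomials of degree $r-1$ in two variables $X,Y$ over $k$. The map $\theta\colon V_{n-1}\otimes V_{m-1}\to V_n\otimes V_m$ defined by $k$-linear extension of $\theta(f\otimes g)=Xf\otimes Yg - Yf\otimes Xg$ is injective. -/
/-!
Embed everything in `P ⊗ P`, where `P = k[X, Y]`. There `θ` becomes multiplication by
`w = X ⊗ Y - Y ⊗ X`, and `P ⊗ P ≅ P[X', Y']` is a domain in which `w ≠ 0`; since over a field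
the inclusion `V_{n-1} ⊗ V_{m-1} → P ⊗ P` is injective, so is `θ`.
-/

open MvPolynomial TensorProduct

/-- `Vr k r` is the space of homogeneous polynomials of degree `r - 1`
in the two variables `X = X 0` and `Y = X 1` over `k`. -/
def Vr (k : Type) [CommRing k] (r : ℕ) : Submodule k (MvPolynomial (Fin 2) k) :=
  homogeneousSubmodule (Fin 2) k (r - 1)

theorem mul_mem_Vr (k : Type) [CommRing k] {a b c : ℕ} (ha : 1 ≤ a) (hb : 1 ≤ b)
    (hc : c = a + b - 1) {f g : MvPolynomial (Fin 2) k}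
    (hf : f ∈ Vr k a) (hg : g ∈ Vr k b) : f * g ∈ Vr k c := by
  rw [Vr, mem_homogeneousSubmodule] at hf hg ⊢
  have h := hf.mul hg
  have he : (a - 1) + (b - 1) = c - 1 := by omega
  rwa [he] at h

theorem X_mem_Vr (k : Type) [CommRing k] (v : Fin 2) : X v ∈ Vr k 2 := by
  have h : (2 : ℕ) - 1 = 1 := rfl
  rw [Vr, h, mem_homogeneousSubmodule]
  exact isHomogeneous_X k v

instance MvPolynomial.noZeroDivisors_tensorProduct {R A σ : Type*} [CommSemiring R]
    [CommSemiring A] [Algebra R A] [NoZeroDivisors A] :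
    NoZeroDivisors (A ⊗[R] MvPolynomial σ R) :=
  let e := algebraTensorAlgEquiv (σ := σ) R A
  e.injective.noZeroDivisors e (map_zero e) (map_mul e)

theorem MvPolynomial.X_tmul_X_sub_X_tmul_X_ne_zero {R σ : Type*} [CommRing R] [Nontrivial R]
    [DecidableEq σ] {i j : σ} (hij : i ≠ j) :
    (X i ⊗ₜ[R] X j - X j ⊗ₜ[R] X i : MvPolynomial σ R ⊗[R] MvPolynomial σ R) ≠ 0 := by
  intro h
  have := congrArg (Algebra.TensorProduct.productMap
    (aeval (Pi.single i (1 : R))) (aeval (Pi.single j (1 : R)))) h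
  simp [Algebra.TensorProduct.productMap_apply_tmul, hij, hij.symm] at this

/-- The map `θ(f ⊗ g) = Xf ⊗ Yg - Yf ⊗ Xg` from `V_{n-1} ⊗ V_{m-1}` to `V_n ⊗ V_m`
is injective. -/
theorem theta_injective (k : Type) [Field k] (n m : ℕ) (hm : 2 ≤ m) (hmn : m ≤ n)
    (θ : TensorProduct k (Vr k (n - 1)) (Vr k (m - 1)) →ₗ[k]
      TensorProduct k (Vr k n) (Vr k m))
    (hθ : ∀ (f : Vr k (n - 1)) (g : Vr k (m - 1)),
      θ (f ⊗ₜ g) =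
        (⟨X 0 * f.1, mul_mem_Vr k (by norm_num) (by omega) (by omega)
            (X_mem_Vr k 0) f.2⟩ : Vr k n) ⊗ₜ
          (⟨X 1 * g.1, mul_mem_Vr k (by norm_num) (by omega) (by omega)
            (X_mem_Vr k 1) g.2⟩ : Vr k m)
        - (⟨X 1 * f.1, mul_mem_Vr k (by norm_num) (by omega) (by omega)
            (X_mem_Vr k 1) f.2⟩ : Vr k n) ⊗ₜ
          (⟨X 0 * g.1, mul_mem_Vr k (by norm_num) (by omega) (by omega)
            (X_mem_Vr k 0) g.2⟩ : Vr k m)) :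
    Function.Injective θ := by
  set w : MvPolynomial (Fin 2) k ⊗[k] MvPolynomial (Fin 2) k := X 0 ⊗ₜ X 1 - X 1 ⊗ₜ X 0
  have hw : w ≠ 0 := X_tmul_X_sub_X_tmul_X_ne_zero (by decide)
  have hsquare : mapIncl (Vr k n) (Vr k m) ∘ₗ θ =
      LinearMap.mulLeft k w ∘ₗ mapIncl (Vr k (n - 1)) (Vr k (m - 1)) :=
    TensorProduct.ext' fun f g => by
      simp [hθ, w, sub_mul, Algebra.TensorProduct.tmul_mul_tmul]
  refine Function.Injective.of_comp (f := mapIncl (Vr k n) (Vr k m)) ?_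
  rw [← LinearMap.coe_comp, hsquare, LinearMap.coe_comp]
  exact (IsRegular.of_ne_zero' hw).left.comp
    (Module.Flat.tensorProduct_mapIncl_injective_of_right _ _)
end

section
/- Let $k$ be a field of characteristic $p$, and suppose $n\geq m$ and $2\leq m\leq p$. Let $V_r$ denote the homogeneous polynomials of degree $r-1$ in $X,Y$ over $k$. Then the map $\lambda\colon V_n\otimes V_m\to V_{n+1}\otimes V_{m-1}$ defined by $k$-linear extension of $\lambda(f\otimes g)= Xf\otimes \partial g/\partial X + Yf\otimes \partial g/\partial Y$ is surjective. -/
/-! The image of `λ` contains the relations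
`λ(x^i y^(n-1-i) ⊗ x^j y^(m-1-j)) = j · e(i+1, j-1) + (m-1-j) · e(i, j)` among the monomial
tensors `e(i, j) = x^i y^(n-i) ⊗ x^j y^(m-2-j)`, whose coefficients are units as long as they
lie strictly between `0` and `m ≤ p`. On an antidiagonal `i + j = s` these relations express each
`e(i, j)` through its neighbour towards `j = 0` when `s ≤ m - 2`, and through its neighbour
towards `j = m - 2` when `s ≥ m - 1`; at the end of the antidiagonal a single term survives.
Since the `e(i, j)` span the target, `λ` is onto. -/

open MvPolynomial TensorProduct

theorem pderiv_isHomogeneous {k : Type} [CommRing k] {d : ℕ} {φ : MvPolynomial (Fin 2) k}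
    (hφ : φ.IsHomogeneous d) (v : Fin 2) : (pderiv v φ).IsHomogeneous (d - 1) := by
  classical
  have hrep : pderiv v φ = ∑ s ∈ φ.support, pderiv v (monomial s (coeff s φ)) := by
    conv_lhs => rw [as_sum φ]
    rw [map_sum]
  rw [← mem_homogeneousSubmodule, hrep]
  apply Submodule.sum_mem
  intro s hs
  rw [pderiv_monomial]
  by_cases h0 : s v = 0
  · simp [h0]
  · rw [mem_homogeneousSubmodule]
    apply isHomogeneous_monomial
    have hsd : s.degree = d := by
      rw [Finsupp.degree_eq_weight_one]
      exact hφ (mem_support_iff.mp hs)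
    have hle : Finsupp.single v 1 ≤ s := Finsupp.single_le_iff.mpr (by omega)
    have key : (s - Finsupp.single v 1) + Finsupp.single v 1 = s := tsub_add_cancel_of_le hle
    have hadd : ((s - Finsupp.single v 1) + Finsupp.single v 1).degree
        = (s - Finsupp.single v 1).degree + (Finsupp.single v 1).degree := by
      simp [Finsupp.degree_eq_weight_one, map_add]
    have hsingle : (Finsupp.single v 1).degree = 1 := by
      exact Finsupp.degree_single v 1
    rw [key] at hadd
    omega

theorem pderiv_mem_Vr (k : Type) [CommRing k] {r : ℕ} {f : MvPolynomial (Fin 2) k}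
    (hf : f ∈ Vr k r) (v : Fin 2) : pderiv v f ∈ Vr k (r - 1) := by
  rw [Vr, mem_homogeneousSubmodule] at hf ⊢
  exact pderiv_isHomogeneous hf v

theorem CharP.natCast_ne_zero_of_pos_of_lt {R : Type*} [AddMonoidWithOne R] (p : ℕ) [CharP R p]
    {c : ℕ} (hc : 0 < c) (hcp : c < p) : (c : R) ≠ 0 := fun h =>
  absurd (Nat.le_of_dvd hc ((CharP.cast_eq_zero_iff R p c).1 h)) (by omega)

section LambdaRelations

variable {K M : Type*} [Field K] [AddCommGroup M] [Module K M]

def LambdaRelations (P : Submodule K M) (e : ℕ → ℕ → M) (n m : ℕ) : Prop :=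
  ∀ i < n, ∀ j < m, (j : K) • e (i + 1) (j - 1) + ((m - 1 - j : ℕ) : K) • e i j ∈ P

variable {P : Submodule K M} {e : ℕ → ℕ → M} {n m : ℕ}

theorem LambdaRelations.mem_of_add_add_two_le (hrel : LambdaRelations P e n m)
    (hcoef : ∀ c : ℕ, 0 < c → c < m → (c : K) ≠ 0) (hmn : m ≤ n + 1) {i j : ℕ}
    (hij : i + j + 2 ≤ m) : e i j ∈ P := by
  induction j generalizing i with
  | zero =>
    have h := hrel i (by omega) 0 (by omega)
    rw [Nat.cast_zero, zero_smul, zero_add] at h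
    exact (P.smul_mem_iff (hcoef _ (by omega) (by omega))).1 h
  | succ j ih =>
    have h := hrel i (by omega) (j + 1) (by omega)
    exact (P.smul_mem_iff (hcoef _ (by omega) (by omega))).1
      ((P.add_mem_iff_right (P.smul_mem _ (ih (i := i + 1) (by omega)))).1 h)

theorem LambdaRelations.mem_of_le_add_add_one (hrel : LambdaRelations P e n m)
    (hcoef : ∀ c : ℕ, 0 < c → c < m → (c : K) ≠ 0) {i j : ℕ} (hi : i ≤ n) (hj : j + 2 ≤ m)
    (hij : m ≤ i + j + 1) : e i j ∈ P := by
  obtain ⟨d, hd⟩ : ∃ d, j + d + 2 = m := ⟨m - 2 - j, by omega⟩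
  induction d generalizing i j with
  | zero =>
    obtain ⟨i, rfl⟩ : ∃ i', i = i' + 1 := ⟨i - 1, by omega⟩
    have h := hrel i (by omega) (j + 1) (by omega)
    rw [show m - 1 - (j + 1) = 0 by omega, Nat.cast_zero, zero_smul, add_zero] at h
    exact (P.smul_mem_iff (hcoef _ (by omega) (by omega))).1 h
  | succ d ih =>
    obtain ⟨i, rfl⟩ : ∃ i', i = i' + 1 := ⟨i - 1, by omega⟩
    have h := hrel i (by omega) (j + 1) (by omega)
    have hnext := ih (i := i) (j := j + 1) (by omega) (by omega) (by omega) (by omega)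
    exact (P.smul_mem_iff (hcoef _ (by omega) (by omega))).1
      ((P.add_mem_iff_left (P.smul_mem _ hnext)).1 h)

theorem LambdaRelations.mem (hrel : LambdaRelations P e n m)
    (hcoef : ∀ c : ℕ, 0 < c → c < m → (c : K) ≠ 0) (hmn : m ≤ n + 1) {i j : ℕ} (hi : i ≤ n)
    (hj : j + 2 ≤ m) : e i j ∈ P := by
  by_cases hij : i + j + 2 ≤ m
  · exact hrel.mem_of_add_add_two_le hcoef hmn hij
  · exact hrel.mem_of_le_add_add_one hcoef hi hj (by omega)

end LambdaRelations

namespace Vr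

variable (k : Type) [CommRing k]

theorem X_zero_pow_mul_X_one_pow_mem {r i : ℕ} (hi : i < r) :
    (X 0 ^ i * X 1 ^ (r - 1 - i) : MvPolynomial (Fin 2) k) ∈ Vr k r := by
  rw [Vr, mem_homogeneousSubmodule]
  convert ((isHomogeneous_X k (0 : Fin 2)).pow i).mul ((isHomogeneous_X k (1 : Fin 2)).pow _)
    using 1
  omega

/-- Junk value `0` for `i ≥ r`; below it only ever occurs with coefficient `0`. -/
noncomputable def mono (r i : ℕ) : Vr k r :=
  if hi : i < r then ⟨_, X_zero_pow_mul_X_one_pow_mem k hi⟩ else 0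

variable {k}

theorem coe_mono {r i : ℕ} (hi : i < r) :
    (mono k r i : MvPolynomial (Fin 2) k) = X 0 ^ i * X 1 ^ (r - 1 - i) := by
  rw [mono, dif_pos hi]

theorem exponent_add_eq_of_mem_support {r : ℕ} {f : MvPolynomial (Fin 2) k} (hf : f ∈ Vr k r)
    {s : Fin 2 →₀ ℕ} (hs : s ∈ f.support) : s 0 + s 1 = r - 1 := by
  simpa [Finsupp.weight_apply, Finsupp.sum_fintype, Fin.sum_univ_two] using
    (mem_homogeneousSubmodule _ _).1 hf (mem_support_iff.1 hs)

theorem span_mono {r : ℕ} (hr : 0 < r) : Submodule.span k (mono k r '' Set.Iio r) = ⊤ := by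
  refine Submodule.eq_top_iff'.2 fun f => ?_
  have hf : f = ∑ s ∈ (f : MvPolynomial (Fin 2) k).support,
      coeff s (f : MvPolynomial (Fin 2) k) • mono k r (s 0) := by
    apply Subtype.ext
    rw [Submodule.coe_sum]
    conv_lhs => rw [as_sum (f : MvPolynomial (Fin 2) k)]
    refine Finset.sum_congr rfl fun s hs => ?_
    have hs := exponent_add_eq_of_mem_support f.2 hs
    rw [Submodule.coe_smul, coe_mono (by omega), monomial_eq,
      Finsupp.prod_fintype _ _ (fun _ => pow_zero _), Fin.prod_univ_two,
      smul_eq_C_mul, show r - 1 - s 0 = s 1 by omega]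
  rw [hf]
  refine Submodule.sum_mem _ fun s hs =>
    Submodule.smul_mem _ _ (Submodule.subset_span ⟨s 0, ?_, rfl⟩)
  have := exponent_add_eq_of_mem_support f.2 hs
  simp only [Set.mem_Iio]
  omega

theorem pderiv_zero_X_zero_pow_mul_X_one_pow (a b : ℕ) :
    pderiv 0 ((X 0 : MvPolynomial (Fin 2) k) ^ a * X 1 ^ b) =
      (a : k) • (X 0 ^ (a - 1) * X 1 ^ b) := by
  simp [smul_eq_C_mul]
  ring

theorem pderiv_one_X_zero_pow_mul_X_one_pow (a b : ℕ) :
    pderiv 1 ((X 0 : MvPolynomial (Fin 2) k) ^ a * X 1 ^ b) =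
      (b : k) • (X 0 ^ a * X 1 ^ (b - 1)) := by
  simp [smul_eq_C_mul]
  ring

theorem mk_X_zero_mul_mono {n i : ℕ} (hi : i < n)
    (h : X 0 * (mono k n i : MvPolynomial (Fin 2) k) ∈ Vr k (n + 1)) :
    (⟨_, h⟩ : Vr k (n + 1)) = mono k (n + 1) (i + 1) := by
  apply Subtype.ext
  dsimp only
  rw [coe_mono hi, coe_mono (by omega), show n + 1 - 1 - (i + 1) = n - 1 - i by omega]
  ring

theorem mk_X_one_mul_mono {n i : ℕ} (hi : i < n)
    (h : X 1 * (mono k n i : MvPolynomial (Fin 2) k) ∈ Vr k (n + 1)) :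
    (⟨_, h⟩ : Vr k (n + 1)) = mono k (n + 1) i := by
  apply Subtype.ext
  dsimp only
  rw [coe_mono hi, coe_mono (by omega), show n + 1 - 1 - i = n - 1 - i + 1 by omega]
  ring

theorem mk_pderiv_zero_mono {m j : ℕ} (hj : j < m)
    (h : pderiv 0 (mono k m j : MvPolynomial (Fin 2) k) ∈ Vr k (m - 1)) :
    (⟨_, h⟩ : Vr k (m - 1)) = (j : k) • mono k (m - 1) (j - 1) := by
  apply Subtype.ext
  dsimp only
  rw [Submodule.coe_smul, coe_mono hj, pderiv_zero_X_zero_pow_mul_X_one_pow]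
  rcases j with _ | j
  · simp
  · rw [coe_mono (by omega), show m - 1 - 1 - (j + 1 - 1) = m - 1 - (j + 1) by omega]

theorem mk_pderiv_one_mono {m j : ℕ} (hj : j < m)
    (h : pderiv 1 (mono k m j : MvPolynomial (Fin 2) k) ∈ Vr k (m - 1)) :
    (⟨_, h⟩ : Vr k (m - 1)) = ((m - 1 - j : ℕ) : k) • mono k (m - 1) j := by
  apply Subtype.ext
  dsimp only
  rw [Submodule.coe_smul, coe_mono hj, pderiv_one_X_zero_pow_mul_X_one_pow]
  by_cases hjm : j + 1 = m
  · simp [show m - 1 - j = 0 by omega]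
  · rw [coe_mono (by omega), show m - 1 - 1 - j = m - 1 - j - 1 by omega]

end Vr

/-- The map `λ(f ⊗ g) = Xf ⊗ ∂g/∂X + Yf ⊗ ∂g/∂Y : V_n ⊗ V_m → V_{n+1} ⊗ V_{m-1}`
is surjective, for `n ≥ m` and `2 ≤ m ≤ p` in characteristic `p`. -/
theorem lambda_surjective (p : ℕ) (k : Type) [Field k] [CharP k p]
    (n m : ℕ) (hm2 : 2 ≤ m) (hmp : m ≤ p) (hmn : m ≤ n)
    (lam : TensorProduct k (Vr k n) (Vr k m) →ₗ[k]
      TensorProduct k (Vr k (n + 1)) (Vr k (m - 1)))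
    (hlam : ∀ (f : Vr k n) (g : Vr k m),
      lam (f ⊗ₜ g) =
        (⟨X 0 * f.1, mul_mem_Vr k (by norm_num) (by omega) (by omega)
            (X_mem_Vr k 0) f.2⟩ : Vr k (n + 1)) ⊗ₜ
          (⟨pderiv 0 g.1, pderiv_mem_Vr k g.2 0⟩ : Vr k (m - 1))
        + (⟨X 1 * f.1, mul_mem_Vr k (by norm_num) (by omega) (by omega)
            (X_mem_Vr k 1) f.2⟩ : Vr k (n + 1)) ⊗ₜ
          (⟨pderiv 1 g.1, pderiv_mem_Vr k g.2 1⟩ : Vr k (m - 1))) :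
    Function.Surjective lam := by
  have hcoef (c : ℕ) (hc : 0 < c) (hcm : c < m) : (c : k) ≠ 0 :=
    CharP.natCast_ne_zero_of_pos_of_lt p hc (by omega)
  have hrel : LambdaRelations (LinearMap.range lam)
      (fun i j => Vr.mono k (n + 1) i ⊗ₜ Vr.mono k (m - 1) j) n m := by
    intro i hi j hj
    have h := hlam (Vr.mono k n i) (Vr.mono k m j)
    rw [Vr.mk_X_zero_mul_mono hi, Vr.mk_X_one_mul_mono hi, Vr.mk_pderiv_zero_mono hj,
      Vr.mk_pderiv_one_mono hj, tmul_smul, tmul_smul] at h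
    exact h ▸ LinearMap.mem_range_self lam _
  rw [← LinearMap.range_eq_top, eq_top_iff, ← map₂_mk_top_top_eq_top,
    ← Vr.span_mono (r := n + 1) (by omega), ← Vr.span_mono (r := m - 1) (by omega),
    Submodule.map₂_span_span, Submodule.span_le]
  rintro _ ⟨_, ⟨i, hi, rfl⟩, _, ⟨j, hj, rfl⟩, rfl⟩
  rw [Set.mem_Iio] at hi hj
  exact hrel.mem hcoef (by omega) (by omega) (by omega)
end

section
/- Let $p$ be an odd prime and $n$ odd with $1<n<p-1$. In the graph $\mathcal{G}^{(n)}$ on $\{1,\dots,p-1\}$ with $i\sim j$ iff ($i+j+n$ odd, $i+j+n<2p$, $n<i+j$, $i<j+n$, $j<n+i$), any two odd vertices are joined by a path, any two even vertices are joined by a path, and no odd vertex is joined to an even vertex; that is, $\mathcal{G}^{(n)}$ has exactly two connected components, the odd vertices and the even vertices. -/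
/-!
Since `n` is odd, adjacent vertices have `i + j` even, so a path never changes parity.
Conversely, each vertex `i` is joined to `i + 2` by a path of length two: through the
vertex `n + 1 - i` when `i < n`, and through `i + 3 - n` otherwise. Chaining these steps
connects any two vertices of the same parity.
-/

/-- Adjacency (possibly a loop) in the graph `𝒢⁽ⁿ⁾`: `V_j` is a non-projective
indecomposable summand of `V_i ⊗ V_n`. -/
def adjCond (p n i j : ℕ) : Prop :=
  Odd (i + j + n) ∧ i + j + n < 2 * p ∧ n < i + j ∧ i < j + n ∧ j < n + i

open Relation

theorem Nat.reflTransGen_of_mod_two_eq {r : ℕ → ℕ → Prop} {a b : ℕ}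
    (hstep : ∀ i, a ≤ i → i + 2 ≤ b → ReflTransGen r i (i + 2))
    {i j : ℕ} (hai : a ≤ i) (hjb : j ≤ b) (hij : i ≤ j) (hpar : i % 2 = j % 2) :
    ReflTransGen r i j := by
  obtain ⟨d, rfl⟩ : ∃ d, j = i + 2 * d := ⟨(j - i) / 2, by omega⟩
  induction d with
  | zero => exact .refl
  | succ d ih => exact (ih (by omega) (by omega) (by omega)).trans (hstep _ (by omega) (by omega))

namespace adjCond

variable {p n : ℕ}

instance : Std.Symm (adjCond p n) where
  symm i j h := by
    obtain ⟨hodd, hsum, hlow, hij, hji⟩ := h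
    exact ⟨by rwa [Nat.add_comm j i], by omega, by omega, by omega, by omega⟩

theorem mod_two_eq (hn : Odd n) {i j : ℕ} (h : adjCond p n i j) : i % 2 = j % 2 := by
  have hsum := Nat.odd_iff.mp h.1
  have hn := Nat.odd_iff.mp hn
  omega

theorem mod_two_eq_of_reflTransGen (hn : Odd n) {i j : ℕ}
    (h : ReflTransGen (adjCond p n) i j) : i % 2 = j % 2 := by
  induction h with
  | refl => rfl
  | tail _ hadj ih => exact ih.trans (mod_two_eq hn hadj)

theorem reflTransGen_add_two (hn : 3 ≤ n) (hnp : n + 2 ≤ p) {i : ℕ} (hi : 1 ≤ i)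
    (hip : i + 3 ≤ p) : ReflTransGen (adjCond p n) i (i + 2) := by
  obtain ⟨k, hik, hki⟩ : ∃ k, adjCond p n i k ∧ adjCond p n k (i + 2) := by
    by_cases h : i < n
    · exact ⟨n + 1 - i, ⟨⟨n, by omega⟩, by omega, by omega, by omega, by omega⟩,
        ⟨⟨n + 1, by omega⟩, by omega, by omega, by omega, by omega⟩⟩
    · exact ⟨i + 3 - n, ⟨⟨i + 1, by omega⟩, by omega, by omega, by omega, by omega⟩,
        ⟨⟨i + 2, by omega⟩, by omega, by omega, by omega, by omega⟩⟩
  exact .head hik (.single hki)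

theorem reflTransGen_of_mod_two_eq (hn : 3 ≤ n) (hnp : n + 2 ≤ p) {i j : ℕ}
    (hi : 1 ≤ i) (hip : i ≤ p - 1) (hj : 1 ≤ j) (hjp : j ≤ p - 1) (hpar : i % 2 = j % 2) :
    ReflTransGen (adjCond p n) i j := by
  have hstep : ∀ k, 1 ≤ k → k + 2 ≤ p - 1 → ReflTransGen (adjCond p n) k (k + 2) :=
    fun k hk hkp => reflTransGen_add_two hn hnp hk (by omega)
  rcases le_total i j with hij | hji
  · exact Nat.reflTransGen_of_mod_two_eq hstep hi hjp hij hpar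
  · exact Std.Symm.symm _ _ (Nat.reflTransGen_of_mod_two_eq hstep hj hip hji hpar.symm)

end adjCond

theorem two_components_of_odd_general (p n : ℕ)
    (hnodd : Odd n) (hn1 : 1 < n) (hn2 : n < p - 1) :
    (∀ i j : ℕ, 1 ≤ i → i ≤ p - 1 → 1 ≤ j → j ≤ p - 1 → Odd i → Odd j →
      Relation.ReflTransGen (adjCond p n) i j) ∧
    (∀ i j : ℕ, 1 ≤ i → i ≤ p - 1 → 1 ≤ j → j ≤ p - 1 → Even i → Even j →
      Relation.ReflTransGen (adjCond p n) i j) ∧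
    (∀ i j : ℕ, 1 ≤ i → i ≤ p - 1 → 1 ≤ j → j ≤ p - 1 → Odd i → Even j →
      ¬ Relation.ReflTransGen (adjCond p n) i j) := by
  have hn3 : 3 ≤ n := by obtain ⟨b, rfl⟩ := hnodd; omega
  have hnp : n + 2 ≤ p := by omega
  refine ⟨fun i j hi hip hj hjp hoi hoj => ?_, fun i j hi hip hj hjp hei hej => ?_,
    fun i j hi hip hj hjp hoi hej hpath => ?_⟩
  · rw [Nat.odd_iff] at hoi hoj
    exact adjCond.reflTransGen_of_mod_two_eq hn3 hnp hi hip hj hjp (by omega)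
  · rw [Nat.even_iff] at hei hej
    exact adjCond.reflTransGen_of_mod_two_eq hn3 hnp hi hip hj hjp (by omega)
  · have hpar := adjCond.mod_two_eq_of_reflTransGen hnodd hpath
    rw [Nat.odd_iff] at hoi
    rw [Nat.even_iff] at hej
    omega

theorem two_components_of_odd (p n : ℕ) (hp : p.Prime) (hodd : Odd p)
    (hnodd : Odd n) (hn1 : 1 < n) (hn2 : n < p - 1) :
    (∀ i j : ℕ, 1 ≤ i → i ≤ p - 1 → 1 ≤ j → j ≤ p - 1 → Odd i → Odd j →
      Relation.ReflTransGen (adjCond p n) i j) ∧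
    (∀ i j : ℕ, 1 ≤ i → i ≤ p - 1 → 1 ≤ j → j ≤ p - 1 → Even i → Even j →
      Relation.ReflTransGen (adjCond p n) i j) ∧
    (∀ i j : ℕ, 1 ≤ i → i ≤ p - 1 → 1 ≤ j → j ≤ p - 1 → Odd i → Even j →
      ¬ Relation.ReflTransGen (adjCond p n) i j) :=
  two_components_of_odd_general p n hnodd hn1 hn2
end

section
/- Let $p$ be an odd prime and $n$ even with $1<n<p-1$. Then the graph $\mathcal{G}^{(n)}$ on $\{1,\dots,p-1\}$ with $i\sim j$ iff ($i+j+n$ odd, $i+j+n<2p$, $n<i+j$, $i<j+n$, $j<n+i$) is connected. -/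
namespace adjCond

variable {p n i j : ℕ}

theorem symm (h : adjCond p n i j) : adjCond p n j i := by
  obtain ⟨hodd, hsum, hlow, hij, hji⟩ := h
  rw [Nat.odd_iff] at hodd
  exact ⟨Nat.odd_iff.mpr (by omega), by omega, by omega, by omega, by omega⟩

instance inst_s9 : Std.Symm (adjCond p n) := ⟨fun _ _ ↦ symm⟩

theorem reflect (h : adjCond p n i j) : adjCond p n (p - i) (p - j) := by
  obtain ⟨hodd, hsum, hlow, hij, hji⟩ := h
  rw [Nat.odd_iff] at hodd
  exact ⟨Nat.odd_iff.mpr (by omega), by omega, by omega, by omega, by omega⟩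

theorem succ_left {m : ℕ} (hm : 0 < m) (hi : m ≤ i) (hip : i + m < p) :
    adjCond p (2 * m) (i + 1) i :=
  ⟨⟨i + m, by ring⟩, by omega, by omega, by omega, by omega⟩

theorem two_mul_add_one_sub {m : ℕ} (hi : 0 < i) (him : i ≤ 2 * m) (hp : 2 * m < p) :
    adjCond p (2 * m) i (2 * m + 1 - i) :=
  ⟨⟨2 * m, by omega⟩, by omega, by omega, by omega, by omega⟩

end adjCond

open Relation

section

variable {p m : ℕ}

theorem reflTransGen_reflect {n i j : ℕ} (h : ReflTransGen (adjCond p n) i j) :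
    ReflTransGen (adjCond p n) (p - i) (p - j) :=
  ReflTransGen.lift (p - ·) (fun _ _ ↦ adjCond.reflect) _ _ h

theorem reflTransGen_hub_of_middle (hm : 0 < m) {i : ℕ} (hi : m ≤ i) (hip : i + m ≤ p) :
    ReflTransGen (adjCond p (2 * m)) i m := by
  induction i, hi using Nat.le_induction with
  | base => exact .refl
  | succ i hi ih => exact .head (adjCond.succ_left hm hi (by omega)) (ih (by omega))

theorem reflTransGen_reflect_hub (hm : 0 < m) (hp : 2 * m ≤ p) {i : ℕ}
    (h : ReflTransGen (adjCond p (2 * m)) i m) : ReflTransGen (adjCond p (2 * m)) (p - i) m :=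
  (reflTransGen_reflect h).trans (reflTransGen_hub_of_middle hm (by omega) (by omega))

theorem reflTransGen_hub_of_add_le (hm : 0 < m) (hp : 2 * m + 1 < p) {i : ℕ} (hi : 0 < i)
    (hip : i + m ≤ p) : ReflTransGen (adjCond p (2 * m)) i m := by
  rcases le_or_gt m i with hmi | hmi
  · exact reflTransGen_hub_of_middle hm hmi hip
  set partner := 2 * m + 1 - i
  have hpartner : adjCond p (2 * m) i partner := adjCond.two_mul_add_one_sub hi (by omega) (by omega)
  rcases le_or_gt (partner + m) p with hmid | hhigh
  · exact .head hpartner (reflTransGen_hub_of_middle hm (by omega) hmid)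
  have hmirror := reflTransGen_hub_of_add_le hm hp (i := p - partner) (by omega) (by omega)
  refine .head hpartner ?_
  rw [← Nat.sub_sub_self (show partner ≤ p by omega)]
  exact reflTransGen_reflect_hub hm (by omega) hmirror
termination_by m - i
decreasing_by omega

theorem reflTransGen_hub (hm : 0 < m) (hp : 2 * m + 1 < p) {i : ℕ} (hi : 0 < i) (hip : i < p) :
    ReflTransGen (adjCond p (2 * m)) i m := by
  rcases le_or_gt (i + m) p with hlow | hhigh
  · exact reflTransGen_hub_of_add_le hm hp hi hlow
  have hmirror := reflTransGen_hub_of_add_le hm hp (i := p - i) (by omega) (by omega)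
  rw [← Nat.sub_sub_self hip.le]
  exact reflTransGen_reflect_hub hm (by omega) hmirror

end

theorem connected_of_even_general (p n : ℕ)
    (hneven : Even n) (hn1 : 1 < n) (hn2 : n < p - 1) :
    ∀ i j : ℕ, 1 ≤ i → i ≤ p - 1 → 1 ≤ j → j ≤ p - 1 →
      Relation.ReflTransGen (adjCond p n) i j := by
  obtain ⟨m, rfl⟩ := hneven
  rw [← two_mul] at hn1 hn2 ⊢
  intro i j hi hip hj hjp
  have hm : 0 < m := by omega
  have hp : 2 * m + 1 < p := by omega
  exact (reflTransGen_hub hm hp hi (by omega)).trans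
    (Std.Symm.symm _ _ (reflTransGen_hub hm hp hj (by omega)))

theorem connected_of_even (p n : ℕ) (hp : p.Prime) (hodd : Odd p)
    (hneven : Even n) (hn1 : 1 < n) (hn2 : n < p - 1) :
    ∀ i j : ℕ, 1 ≤ i → i ≤ p - 1 → 1 ≤ j → j ≤ p - 1 →
      Relation.ReflTransGen (adjCond p n) i j :=
  connected_of_even_general p n hneven hn1 hn2
end

section
/- Let $p$ be an odd prime, $1\leq n\leq p-1$, and for $1\leq i\leq p-1$ let $d(i)$ be the number of $j\in\{1,\dots,p-1\}$ such that $i+j+n$ is odd, $i+j+n<2p$, $n<i+j$, $i<j+n$, and $j<n+i$. Then $d(i)=\min\{i,\,p-i,\,n,\,p-n\}$. -/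
instance (p n i j : ℕ) : Decidable (adjCond p n i j) := by
  unfold adjCond; infer_instance

theorem card_image_add_two_mul_range (a m : ℕ) :
    ((Finset.range m).image fun k => a + 2 * k).card = m := by
  rw [Finset.card_image_of_injective _ fun x y h => by omega, Finset.card_range]

theorem filter_adjCond_eq_image_range (p n i : ℕ) :
    (Finset.Icc 1 (p - 1)).filter (fun j => adjCond p n i j) =
      (Finset.range (min (min i (p - i)) (min n (p - n)))).image
        fun k => Nat.dist i n + 1 + 2 * k := by
  ext j
  simp only [Finset.mem_filter, Finset.mem_Icc, Finset.mem_image, Finset.mem_range, adjCond,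
    Nat.odd_iff, Nat.dist]
  constructor
  · rintro ⟨-, hodd, hlt, hn, hi, hj⟩
    exact ⟨(j - (i - n + (n - i)) - 1) / 2, by omega, by omega⟩
  · rintro ⟨k, hk, rfl⟩
    omega

theorem degree_eq_min_general (p n : ℕ) (i : ℕ) :
    ((Finset.Icc 1 (p - 1)).filter (fun j => adjCond p n i j)).card
      = min (min i (p - i)) (min n (p - n)) := by
  rw [filter_adjCond_eq_image_range, card_image_add_two_mul_range]

theorem degree_eq_min (p n : ℕ) (hp : p.Prime) (hodd : Odd p)
    (hn1 : 1 ≤ n) (hn2 : n ≤ p - 1) (i : ℕ) (hi1 : 1 ≤ i) (hi2 : i ≤ p - 1) :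
    ((Finset.Icc 1 (p - 1)).filter (fun j => adjCond p n i j)).card
      = min (min i (p - i)) (min n (p - n)) :=
  degree_eq_min_general p n i
end

section
/- Let $p$ be an odd prime, $2\leq n\leq p-2$, and $1\leq i\leq p-1$. The sum of all $j\in\{1,\dots,p-1\}$ satisfying ($i+j+n$ odd, $i+j+n<2p$, $n<i+j$, $i<j+n$, $j<n+i$) equals $in$ if $i+n\leq p$, and equals $(p-i)(p-n)$ if $i+n\geq p$. -/
/-!
The neighbours of `i` are exactly the `j` with `|i - n| < j` of the right parity and
`j < min (i + n) (2p - i - n)`: an arithmetic progression with step `2`, first term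
`|i - n| + 1` and `m = min (min i n) (min (p - i) (p - n))` terms. Its sum is
`m * (|i - n| + m)`, and `|i - n| + m` is `max i n` when `i + n ≤ p` (then `m = min i n`)
and `max (p - i) (p - n)` when `p ≤ i + n` (then `m = min (p - i) (p - n)`).
-/

theorem sum_range_add_one_add_two_mul (d m : ℕ) :
    ∑ k ∈ Finset.range m, (d + 1 + 2 * k) = m * (d + m) := by
  induction m with
  | zero => simp
  | succ m ih => rw [Finset.sum_range_succ, ih]; ring

theorem filter_adjCond_eq_image (p n i : ℕ) :
    (Finset.Icc 1 (p - 1)).filter (fun j => adjCond p n i j) =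
      (Finset.range (min (min i n) (min (p - i) (p - n)))).image
        (fun k => max i n - min i n + 1 + 2 * k) := by
  ext j
  simp only [Finset.mem_filter, Finset.mem_Icc, Finset.mem_image, Finset.mem_range,
    adjCond, Nat.odd_iff]
  constructor
  · rintro ⟨-, _, _, _, _, _⟩
    exact ⟨(j - (max i n - min i n + 1)) / 2, by omega⟩
  · rintro ⟨k, hk, rfl⟩
    omega

theorem sum_filter_adjCond (p n i : ℕ) :
    ∑ j ∈ (Finset.Icc 1 (p - 1)).filter (fun j => adjCond p n i j), j =
      min (min i n) (min (p - i) (p - n)) *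
        (max i n - min i n + min (min i n) (min (p - i) (p - n))) := by
  rw [filter_adjCond_eq_image, Finset.sum_image fun _ _ _ _ h => by omega]
  exact sum_range_add_one_add_two_mul _ _

theorem sum_of_neighbours_general (p n i : ℕ) :
    (i + n ≤ p → ∑ j ∈ (Finset.Icc 1 (p - 1)).filter (fun j => adjCond p n i j), j
        = i * n) ∧
    (p ≤ i + n → ∑ j ∈ (Finset.Icc 1 (p - 1)).filter (fun j => adjCond p n i j), j
        = (p - i) * (p - n)) := by
  rw [sum_filter_adjCond]
  constructor
  · intro h
    rw [← min_mul_max i n]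
    congr 1 <;> omega
  · intro h
    have hm : min (min i n) (min (p - i) (p - n)) = min (p - i) (p - n) := by omega
    rw [hm, ← min_mul_max (p - i) (p - n)]
    rcases Nat.eq_zero_or_pos (min (p - i) (p - n)) with h0 | hpos
    · simp [h0]
    · congr 1; omega

theorem sum_of_neighbours (p n i : ℕ) (hp : p.Prime) (hodd : Odd p)
    (hn1 : 2 ≤ n) (hn2 : n ≤ p - 2) (hi1 : 1 ≤ i) (hi2 : i ≤ p - 1) :
    (i + n ≤ p → ∑ j ∈ (Finset.Icc 1 (p - 1)).filter (fun j => adjCond p n i j), j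
        = i * n) ∧
    (p ≤ i + n → ∑ j ∈ (Finset.Icc 1 (p - 1)).filter (fun j => adjCond p n i j), j
        = (p - i) * (p - n)) :=
  sum_of_neighbours_general p n i
end

section
/- Let $p$ be an odd prime and $1<n<p-1$. Set $r=n$ if $n$ is odd and $r=p-n$ if $n$ is even, and define the graph $\bar{\mathcal{G}}$ on $\{1,\dots,(p-1)/2\}$ with $i\sim j$ iff $2|i-j|<r<2(i+j-1)<2p-r$. Then $\bar{\mathcal{G}}$ is connected. -/
/-!
Write `r = 2s + 1` (it is odd, with `3 ≤ r ≤ p - 2`). Every vertex `k ≥ 2` reaches a smaller one: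
a vertex `k > s + 1` is adjacent to `k - s`, and a vertex `k ≤ s + 1` is joined to `k - 1` through
its reflection `s + 3 - k`. Hence every vertex is connected to `1`.
-/

/-- Adjacency in the half-size graph `𝒢̄`: `i ∼ j` iff `2|i-j| < r < 2(i+j-1) < 2p - r`. -/
def adjBar (p r i j : ℕ) : Prop :=
  2 * ((i : ℤ) - (j : ℤ)).natAbs < r ∧ r < 2 * (i + j - 1) ∧ 2 * (i + j - 1) < 2 * p - r

open Relation

theorem Relation.reflTransGen_one_of_exists_lt {R : ℕ → ℕ → Prop} {N : ℕ}
    (hdesc : ∀ k, 1 < k → k ≤ N → ∃ m, 1 ≤ m ∧ m < k ∧ ReflTransGen R k m) :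
    ∀ k, 1 ≤ k → k ≤ N → ReflTransGen R k 1 := by
  intro k
  induction k using Nat.strong_induction_on with
  | _ k ih =>
    intro hk hkN
    rcases hk.eq_or_lt with rfl | hk
    · exact .refl
    · obtain ⟨m, hm, hmk, hkm⟩ := hdesc k hk hkN
      exact hkm.trans (ih m hmk hm (by omega))

instance (p r : ℕ) : Std.Symm (adjBar p r) :=
  ⟨fun _ _ h => by unfold adjBar at *; omega⟩

theorem adjBar_exists_lt_reflTransGen {p s k : ℕ} (hs : 1 ≤ s) (hsp : 2 * s + 3 ≤ p)
    (hk : 1 < k) (hkp : 2 * k ≤ p) :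
    ∃ m, 1 ≤ m ∧ m < k ∧ ReflTransGen (adjBar p (2 * s + 1)) k m := by
  by_cases hks : k ≤ s + 1
  · have hreflect : adjBar p (2 * s + 1) k (s + 3 - k) := by unfold adjBar; omega
    have hback : adjBar p (2 * s + 1) (s + 3 - k) (k - 1) := by unfold adjBar; omega
    exact ⟨k - 1, by omega, by omega, .head hreflect (.single hback)⟩
  · have hjump : adjBar p (2 * s + 1) k (k - s) := by unfold adjBar; omega
    exact ⟨k - s, by omega, by omega, .single hjump⟩

theorem exists_two_mul_add_one_eq_ite_odd {p n : ℕ} (hodd : Odd p) (hn1 : 1 < n)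
    (hn2 : n < p - 1) :
    ∃ s, (if Odd n then n else p - n) = 2 * s + 1 ∧ 1 ≤ s ∧ 2 * s + 3 ≤ p := by
  obtain ⟨t, rfl⟩ := hodd
  split_ifs with hn
  · obtain ⟨s, rfl⟩ := hn
    exact ⟨s, rfl, by omega, by omega⟩
  · obtain ⟨m, rfl⟩ := Nat.not_odd_iff_even.mp hn
    exact ⟨t - m, by omega, by omega, by omega⟩

theorem barGraph_connected_general (p n : ℕ) (hodd : Odd p)
    (hn1 : 1 < n) (hn2 : n < p - 1) :
    ∀ i j : ℕ, 1 ≤ i → i ≤ (p - 1) / 2 → 1 ≤ j → j ≤ (p - 1) / 2 →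
      Relation.ReflTransGen (adjBar p (if Odd n then n else p - n)) i j := by
  intro i j hi hip hj hjp
  obtain ⟨s, hr, hs, hsp⟩ := exists_two_mul_add_one_eq_ite_odd hodd hn1 hn2
  have hroot : ∀ k, 1 ≤ k → k ≤ (p - 1) / 2 → ReflTransGen (adjBar p (2 * s + 1)) k 1 :=
    reflTransGen_one_of_exists_lt fun k hk hkp =>
      adjBar_exists_lt_reflTransGen hs hsp hk (by omega)
  rw [hr]
  exact (hroot i hi hip).trans (symm (hroot j hj hjp))

theorem barGraph_connected (p n : ℕ) (hp : p.Prime) (hodd : Odd p)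
    (hn1 : 1 < n) (hn2 : n < p - 1) :
    ∀ i j : ℕ, 1 ≤ i → i ≤ (p - 1) / 2 → 1 ≤ j → j ≤ (p - 1) / 2 →
      Relation.ReflTransGen (adjBar p (if Odd n then n else p - n)) i j :=
  barGraph_connected_general p n hodd hn1 hn2
end

section
/- Let $p$ be an odd prime and $1<n<p-1$, and set $r=n$ if $n$ is odd, $r=p-n$ if $n$ is even. For $1\leq i,j\leq (p-1)/2$, define $\bar{A}^{(n)}_{i,j}=A^{(n)}_{2i-1,2j-1}$ if $n$ is odd and $\bar{A}^{(n)}_{i,j}=A^{(n)}_{2i-1,p+1-2j}$ if $n$ is even, where $A^{(n)}_{a,b}=1$ iff ($a+b+n$ odd, $a+b+n<2p$, $n<a+b$, $a<b+n$, $b<n+a$). Then $\bar{A}^{(n)}_{i,j}=1$ if and only if $2|i-j|<r<2(i+j-1)<2p-r$; consequently $\bar{A}^{(n)}$ is symmetric and $\bar{A}^{(p-n)}=\bar{A}^{(n)}$. -/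
/-!
Substituting `a = 2i - 1` and `b = 2j - 1` (for `n` odd) or `b = p + 1 - 2j` (for `n` even), the
parity condition on `a + b + n` holds automatically, and the four inequalities defining `condA`
become the four inequalities bounding `2|i - j|` and `2(i + j - 1)` in terms of `r`. That condition
is symmetric in `i, j` and depends on `n` only through `r`, which is invariant under `n ↦ p - n`.
-/

/-- The condition for `V_b` to be a non-projective summand of `V_a ⊗ V_n`. -/
def condA (p n a b : ℕ) : Prop :=
  Odd (a + b + n) ∧ a + b + n < 2 * p ∧ n < a + b ∧ a < b + n ∧ b < n + a

/-- The entries of the half-size matrix `Ā⁽ⁿ⁾`: `Ā⁽ⁿ⁾_{i,j} = A⁽ⁿ⁾_{2i-1,2j-1}`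
for `n` odd, and `Ā⁽ⁿ⁾_{i,j} = A⁽ⁿ⁾_{2i-1,p+1-2j}` for `n` even. -/
def condAbar (p n i j : ℕ) : Prop :=
  if Odd n then condA p n (2 * i - 1) (2 * j - 1) else condA p n (2 * i - 1) (p + 1 - 2 * j)

def reducedIndex (p n : ℕ) : ℕ := if Odd n then n else p - n

def AbarCond (p r i j : ℕ) : Prop :=
  2 * ((i : ℤ) - (j : ℤ)).natAbs < r ∧ r < 2 * (i + j - 1) ∧ 2 * (i + j - 1) < 2 * p - r

theorem AbarCond.comm {p r i j : ℕ} : AbarCond p r i j ↔ AbarCond p r j i := by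
  unfold AbarCond
  omega

theorem condA_odd_iff {p n i j : ℕ} (hn : Odd n) (hi : 1 ≤ i) (hj : 1 ≤ j) :
    condA p n (2 * i - 1) (2 * j - 1) ↔ AbarCond p n i j := by
  obtain ⟨k, rfl⟩ := hn
  have hpar : Odd (2 * i - 1 + (2 * j - 1) + (2 * k + 1)) := ⟨i + j + k - 1, by omega⟩
  simp only [condA, AbarCond, hpar, true_and]
  omega

theorem condA_even_iff {p n i j : ℕ} (hp : Odd p) (hn : Even n) (hnp : n ≤ p) (hi : 1 ≤ i)
    (hj : 2 * j ≤ p + 1) :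
    condA p n (2 * i - 1) (p + 1 - 2 * j) ↔ AbarCond p (p - n) i j := by
  obtain ⟨k, rfl⟩ := hp
  obtain ⟨m, rfl⟩ := hn
  have hpar : Odd (2 * i - 1 + (2 * k + 1 + 1 - 2 * j) + (m + m)) := ⟨i + k - j + m, by omega⟩
  simp only [condA, AbarCond, hpar, true_and]
  omega

theorem condAbar_iff {p n i j : ℕ} (hp : Odd p) (hnp : n ≤ p) (hi : 1 ≤ i) (hj : 1 ≤ j)
    (hjp : 2 * j ≤ p + 1) : condAbar p n i j ↔ AbarCond p (reducedIndex p n) i j := by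
  by_cases hn : Odd n
  · simp only [condAbar, reducedIndex, if_pos hn, condA_odd_iff hn hi hj]
  · simp only [condAbar, reducedIndex, if_neg hn,
      condA_even_iff hp (Nat.not_odd_iff_even.mp hn) hnp hi hjp]

theorem reducedIndex_sub {p n : ℕ} (hp : Odd p) (hnp : n ≤ p) :
    reducedIndex p (p - n) = reducedIndex p n := by
  have hpar : Odd (p - n) ↔ ¬Odd n := by
    rw [Nat.odd_sub hnp]
    simp [hp]
  by_cases hn : Odd n
  · simp [reducedIndex, hn, hpar, Nat.sub_sub_self hnp]
  · simp [reducedIndex, hn, hpar]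

theorem condAbar_characterisation_general (p n : ℕ) (hodd : Odd p)
    (hn2 : n < p - 1) (r : ℕ) (hr : r = if Odd n then n else p - n)
    (i j : ℕ) (hi1 : 1 ≤ i) (hi2 : i ≤ (p - 1) / 2) (hj1 : 1 ≤ j) (hj2 : j ≤ (p - 1) / 2) :
    (condAbar p n i j ↔
      (2 * ((i : ℤ) - (j : ℤ)).natAbs < r ∧ r < 2 * (i + j - 1) ∧
        2 * (i + j - 1) < 2 * p - r)) ∧
    (condAbar p n i j ↔ condAbar p n j i) ∧
    (condAbar p (p - n) i j ↔ condAbar p n i j) := by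
  subst hr
  have hnp : n ≤ p := by omega
  have hip : 2 * i ≤ p + 1 := by omega
  have hjp : 2 * j ≤ p + 1 := by omega
  refine ⟨condAbar_iff hodd hnp hi1 hj1 hjp, ?_, ?_⟩
  · rw [condAbar_iff hodd hnp hi1 hj1 hjp, condAbar_iff hodd hnp hj1 hi1 hip, AbarCond.comm]
  · rw [condAbar_iff hodd (Nat.sub_le p n) hi1 hj1 hjp, condAbar_iff hodd hnp hi1 hj1 hjp,
      reducedIndex_sub hodd hnp]

theorem condAbar_characterisation (p n : ℕ) (hp : p.Prime) (hodd : Odd p)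
    (hn1 : 1 < n) (hn2 : n < p - 1) (r : ℕ) (hr : r = if Odd n then n else p - n)
    (i j : ℕ) (hi1 : 1 ≤ i) (hi2 : i ≤ (p - 1) / 2) (hj1 : 1 ≤ j) (hj2 : j ≤ (p - 1) / 2) :
    (condAbar p n i j ↔
      (2 * ((i : ℤ) - (j : ℤ)).natAbs < r ∧ r < 2 * (i + j - 1) ∧
        2 * (i + j - 1) < 2 * p - r)) ∧
    (condAbar p n i j ↔ condAbar p n j i) ∧
    (condAbar p (p - n) i j ↔ condAbar p n i j) :=
  condAbar_characterisation_general p n hodd hn2 r hr i j hi1 hi2 hj1 hj2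
end
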